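/- arXiv:1904.09653 — 3 statements merged into one kernel-verified Lean document; each statement's English description precedes it below -/
import Mathlib

section
/- Assume β l i j ≥ 0 for all l, i, j, α l k > 0 for all l, k, σ² > 0, and P > 0. Let S be the feasible set of pilots { φ : ∀ l k, Re (star (φ l k) ⬝ᵥ (φ l k)) ≤ τ * P }. Let φ ∈ S, let μ* be defined by μ* l k = (β l l k) • ((D l φ)⁻¹ *ᵥ (φ l k)), and let φ' ∈ S satisfy f φ'' μ* ≤ f φ' μ* for all φ'' ∈ S. Then G φ ≤ G φ'. (Each iteration of the proposed nonorthogonal pilot design — update μ optimally, then maximize f(·, μ) over the feasible pilots — does not decrease the objective G, equivalently the weighted sum MSE is nonincreasing.) -/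
open Matrix ComplexConjugate
open scoped ComplexOrder

/-!
For fixed pilots `φ`, completing the square in each `μ l k` (with respect to the positive
definite matrix `D l φ`) shows `f φ μ ≤ G φ`, with equality at the optimal update `μ*`.
Hence `G φ = f φ μ* ≤ f φ' μ* ≤ G φ'`.
-/

namespace Matrix

lemma re_star_dotProduct_comm {n : Type*} [Fintype n] (v w : n → ℂ) :
    (star v ⬝ᵥ w).re = (star w ⬝ᵥ v).re := by
  rw [star_dotProduct, Complex.star_def, Complex.conj_re]

variable {n : Type*} [Fintype n] [DecidableEq n]

lemma mulVec_inv_mulVec {A : Matrix n n ℂ} (hA : IsUnit A) (v : n → ℂ) :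
    A *ᵥ (A⁻¹ *ᵥ v) = v := by
  rw [mulVec_mulVec, mul_nonsing_inv _ ((isUnit_iff_isUnit_det A).mp hA), one_mulVec]

lemma IsHermitian.quadTransform_eq {A : Matrix n n ℂ} (hH : A.IsHermitian) (hU : IsUnit A)
    (b : ℝ) (u v : n → ℂ) :
    2 * b * (star u ⬝ᵥ v).re - (star u ⬝ᵥ (A *ᵥ u)).re =
      b ^ 2 * (star v ⬝ᵥ (A⁻¹ *ᵥ v)).re -
        (star (u - b • (A⁻¹ *ᵥ v)) ⬝ᵥ (A *ᵥ (u - b • (A⁻¹ *ᵥ v)))).re := by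
  set q := A⁻¹ *ᵥ v
  have hq : A *ᵥ q = v := mulVec_inv_mulVec hU v
  have hqu : (star q ⬝ᵥ (A *ᵥ u)).re = (star u ⬝ᵥ v).re := by
    rw [re_star_dotProduct_comm, star_mulVec, hH.eq, ← dotProduct_mulVec, hq]
  have hqv : (star q ⬝ᵥ v).re = (star v ⬝ᵥ q).re := re_star_dotProduct_comm q v
  simp only [mulVec_sub, mulVec_smul, hq, star_sub, star_smul, star_trivial, sub_dotProduct,
    dotProduct_sub, smul_dotProduct, dotProduct_smul, Complex.sub_re, Complex.smul_re,
    smul_eq_mul]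
  rw [hqu, hqv]
  ring

lemma IsHermitian.quadTransform_smul_inv_mulVec {A : Matrix n n ℂ} (hH : A.IsHermitian)
    (hU : IsUnit A) (b : ℝ) (v : n → ℂ) :
    2 * b * (star (b • (A⁻¹ *ᵥ v)) ⬝ᵥ v).re -
        (star (b • (A⁻¹ *ᵥ v)) ⬝ᵥ (A *ᵥ (b • (A⁻¹ *ᵥ v)))).re =
      b ^ 2 * (star v ⬝ᵥ (A⁻¹ *ᵥ v)).re := by
  rw [hH.quadTransform_eq hU, sub_self, star_zero, zero_dotProduct, Complex.zero_re, sub_zero]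

lemma PosDef.quadTransform_le {A : Matrix n n ℂ} (hA : A.PosDef) (b : ℝ) (u v : n → ℂ) :
    2 * b * (star u ⬝ᵥ v).re - (star u ⬝ᵥ (A *ᵥ u)).re ≤
      b ^ 2 * (star v ⬝ᵥ (A⁻¹ *ᵥ v)).re := by
  rw [hA.isHermitian.quadTransform_eq hA.isUnit]
  exact sub_le_self _ (Complex.nonneg_iff.mp (hA.posSemidef.dotProduct_mulVec_nonneg _)).1

lemma posDef_of_apply_eq_add_sum {ι κ : Type*} [Fintype ι] [Fintype κ] {σ2 : ℝ} (hσ2 : 0 < σ2)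
    {c : ι → κ → ℝ} (hc : ∀ i j, 0 ≤ c i j) (v : ι → κ → n → ℂ) {M : Matrix n n ℂ}
    (hM : ∀ s t, M s t = (σ2 : ℂ) * (if s = t then 1 else 0) +
      ∑ i, ∑ j, (c i j : ℂ) * v i j s * conj (v i j t)) :
    M.PosDef := by
  have hM' : M = σ2 • (1 : Matrix n n ℂ) + ∑ i, ∑ j, c i j • vecMulVec (v i j) (star (v i j)) := by
    ext s t
    simp [hM, one_apply, sum_apply, vecMulVec_apply, Complex.real_smul, mul_assoc]
  rw [hM']
  exact (PosDef.one.smul hσ2).add_posSemidef <| posSemidef_sum _ fun i _ ↦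
    posSemidef_sum _ fun j _ ↦ (posSemidef_vecMulVec_self_star _).smul (hc i j)

end Matrix

theorem pilot_iteration_nondecreasing_general (L K τ : ℕ)
    (σ2 : ℝ) (hσ2 : 0 < σ2)
    (β : Fin L → Fin L → Fin K → ℝ) (hβ : ∀ l i j, 0 ≤ β l i j)
    (α : Fin L → Fin K → ℝ) (hα : ∀ l k, 0 < α l k)
    (D : Fin L → (Fin L → Fin K → (Fin τ → ℂ)) → Matrix (Fin τ) (Fin τ) ℂ)
    (hD : ∀ l φ s t, D l φ s t =
      (σ2 : ℂ) * (if s = t then 1 else 0) +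
        ∑ i : Fin L, ∑ j : Fin K, (β l i j : ℂ) * (φ i j s) * conj (φ i j t))
    (G : (Fin L → Fin K → (Fin τ → ℂ)) → ℝ)
    (hG : ∀ φ, G φ = ∑ l : Fin L, ∑ k : Fin K,
      α l k * (β l l k) ^ 2 * (star (φ l k) ⬝ᵥ ((D l φ)⁻¹ *ᵥ (φ l k))).re)
    (f : (Fin L → Fin K → (Fin τ → ℂ)) → (Fin L → Fin K → (Fin τ → ℂ)) → ℝ)
    (hf : ∀ φ μ, f φ μ = ∑ l : Fin L, ∑ k : Fin K,
      α l k * (2 * (β l l k) * (star (μ l k) ⬝ᵥ (φ l k)).re -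
        (star (μ l k) ⬝ᵥ ((D l φ) *ᵥ (μ l k))).re))
    (S : Set (Fin L → Fin K → (Fin τ → ℂ)))
    (φ : Fin L → Fin K → (Fin τ → ℂ)) (hφ : φ ∈ S)
    (μstar : Fin L → Fin K → (Fin τ → ℂ))
    (hμstar : ∀ l k, μstar l k = (β l l k) • ((D l φ)⁻¹ *ᵥ (φ l k)))
    (φ' : Fin L → Fin K → (Fin τ → ℂ))
    (hopt : ∀ φ'' ∈ S, f φ'' μstar ≤ f φ' μstar) :
    G φ ≤ G φ' := by
  have hD_posDef : ∀ ψ l, (D l ψ).PosDef := fun ψ l ↦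
    posDef_of_apply_eq_add_sum hσ2 (hβ l) ψ (hD l ψ)
  have hGφ : G φ = f φ μstar := by
    rw [hG, hf]
    refine Finset.sum_congr rfl fun l _ ↦ Finset.sum_congr rfl fun k _ ↦ ?_
    rw [hμstar, (hD_posDef φ l).isHermitian.quadTransform_smul_inv_mulVec (hD_posDef φ l).isUnit,
      mul_assoc]
  have hfG : f φ' μstar ≤ G φ' := by
    rw [hG, hf]
    refine Finset.sum_le_sum fun l _ ↦ Finset.sum_le_sum fun k _ ↦ ?_
    rw [mul_assoc (α l k)]
    exact mul_le_mul_of_nonneg_left ((hD_posDef φ' l).quadTransform_le _ _ _) (hα l k).le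
  calc G φ = f φ μstar := hGφ
    _ ≤ f φ' μstar := hopt φ hφ
    _ ≤ G φ' := hfG

/-- Monotonicity of an iteration of the proposed nonorthogonal pilot design:
starting from a feasible `φ`, updating the auxiliary variable optimally to
`μ* l k = β_{llk} • (D_l φ)⁻¹ *ᵥ φ_{lk}` and then maximizing `f (·, μ*)` over the
feasible set `S` to obtain `φ'` does not decrease the objective: `G φ ≤ G φ'`. -/
theorem pilot_iteration_nondecreasing (L K τ : ℕ)
    (hL : 0 < L) (hK : 0 < K) (hτ : 0 < τ)
    (σ2 : ℝ) (hσ2 : 0 < σ2)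
    (β : Fin L → Fin L → Fin K → ℝ) (hβ : ∀ l i j, 0 ≤ β l i j)
    (α : Fin L → Fin K → ℝ) (hα : ∀ l k, 0 < α l k)
    (P : ℝ) (hP : 0 < P)
    (D : Fin L → (Fin L → Fin K → (Fin τ → ℂ)) → Matrix (Fin τ) (Fin τ) ℂ)
    (hD : ∀ l φ s t, D l φ s t =
      (σ2 : ℂ) * (if s = t then 1 else 0) +
        ∑ i : Fin L, ∑ j : Fin K, (β l i j : ℂ) * (φ i j s) * conj (φ i j t))
    (G : (Fin L → Fin K → (Fin τ → ℂ)) → ℝ)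
    (hG : ∀ φ, G φ = ∑ l : Fin L, ∑ k : Fin K,
      α l k * (β l l k) ^ 2 * (star (φ l k) ⬝ᵥ ((D l φ)⁻¹ *ᵥ (φ l k))).re)
    (f : (Fin L → Fin K → (Fin τ → ℂ)) → (Fin L → Fin K → (Fin τ → ℂ)) → ℝ)
    (hf : ∀ φ μ, f φ μ = ∑ l : Fin L, ∑ k : Fin K,
      α l k * (2 * (β l l k) * (star (μ l k) ⬝ᵥ (φ l k)).re -
        (star (μ l k) ⬝ᵥ ((D l φ) *ᵥ (μ l k))).re))
    (S : Set (Fin L → Fin K → (Fin τ → ℂ)))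
    (hS : S = {φ | ∀ l k, (star (φ l k) ⬝ᵥ (φ l k)).re ≤ (τ : ℝ) * P})
    (φ : Fin L → Fin K → (Fin τ → ℂ)) (hφ : φ ∈ S)
    (μstar : Fin L → Fin K → (Fin τ → ℂ))
    (hμstar : ∀ l k, μstar l k = (β l l k) • ((D l φ)⁻¹ *ᵥ (φ l k)))
    (φ' : Fin L → Fin K → (Fin τ → ℂ)) (hφ' : φ' ∈ S)
    (hopt : ∀ φ'' ∈ S, f φ'' μstar ≤ f φ' μstar) :
    G φ ≤ G φ' :=
  pilot_iteration_nondecreasing_general L K τ σ2 hσ2 β hβ α hα D hD G hG f hf S φ hφ μstar hμstar φ'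
    hopt
end

section
/- In the correlated multicell setup, for every family Λ : Fin L → Fin K → Matrix (Fin τ × Fin M') (Fin M') ℂ, one has f φ Λ ≤ Σ_{l,k} α l k * Re (trace ((W l k) * (U l)⁻¹ * (W l k)ᴴ)), with equality if and only if Λ l k = (U l)⁻¹ * (W l k)ᴴ for every (l,k). (Hence maximizing the weighted sum Σ α_{lk} tr(W_{lk} U_l⁻¹ W_{lk}ᴴ) over pilots is equivalent to jointly maximizing f over pilots and Λ, the optimal auxiliary update being Λ_{lk} = U_l⁻¹ W_{lk}ᴴ.) -/
open Matrix ComplexConjugate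
open scoped ComplexOrder Kronecker

/-!
Complete the square in each term: with `D = Λ - U⁻¹ Wᴴ`,
`2 Re tr(W Λ) - Re tr(Λᴴ U Λ) = Re tr(W U⁻¹ Wᴴ) - Re tr(Dᴴ U D)`.
Since `U = σ² I + Σ β (φ φᴴ) ⊗ R` is positive definite, `Re tr(Dᴴ U D) ≥ 0` with equality
only for `D = 0`; summing with the positive weights `α` gives the bound and its equality case.
-/

namespace Matrix

variable {m n : Type*} [Fintype m] [Fintype n]

lemma PosDef.conjTranspose_mul_mul_same_eq_zero_iff {A : Matrix n n ℂ} (hA : A.PosDef)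
    {B : Matrix n m ℂ} : Bᴴ * A * B = 0 ↔ B = 0 := by
  classical
  refine ⟨fun h => ?_, fun h => by simp [h]⟩
  have hBx : ∀ x, B *ᵥ x = 0 := fun x => by
    by_contra hne
    have := hA.dotProduct_mulVec_pos hne
    simp only [star_mulVec, dotProduct_mulVec, vecMul_vecMul] at this
    simp [h] at this
  ext i j
  simpa using congr_fun (hBx (Pi.single j 1)) i

lemma PosSemidef.re_trace_conjTranspose_mul_mul_same_nonneg {A : Matrix n n ℂ}
    (hA : A.PosSemidef) (B : Matrix n m ℂ) : 0 ≤ (trace (Bᴴ * A * B)).re :=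
  (Complex.nonneg_iff.mp (hA.conjTranspose_mul_mul_same B).trace_nonneg).1

lemma PosDef.re_trace_conjTranspose_mul_mul_same_eq_zero_iff {A : Matrix n n ℂ}
    (hA : A.PosDef) {B : Matrix n m ℂ} : (trace (Bᴴ * A * B)).re = 0 ↔ B = 0 := by
  have hpsd := hA.posSemidef.conjTranspose_mul_mul_same B
  rw [← hA.conjTranspose_mul_mul_same_eq_zero_iff, ← hpsd.trace_eq_zero_iff]
  have him := (Complex.nonneg_iff.mp hpsd.trace_nonneg).2
  exact ⟨fun h => Complex.ext h him.symm, fun h => by simp [h]⟩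

end Matrix

section QuadraticTransform

variable {m n : Type*} [Fintype m] [Fintype n] [DecidableEq n]

def quadraticTransform (W : Matrix m n ℂ) (U : Matrix n n ℂ) (Λ : Matrix n m ℂ) : ℝ :=
  2 * (trace (W * Λ)).re - (trace (Λᴴ * U * Λ)).re

lemma quadraticTransform_eq_sub {U : Matrix n n ℂ} (hU : U.IsHermitian) (hUdet : IsUnit U.det)
    (W : Matrix m n ℂ) (Λ : Matrix n m ℂ) :
    quadraticTransform W U Λ = (trace (W * U⁻¹ * Wᴴ)).re -
      (trace ((Λ - U⁻¹ * Wᴴ)ᴴ * U * (Λ - U⁻¹ * Wᴴ))).re := by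
  have hUV : U * (U⁻¹ * Wᴴ) = Wᴴ := by
    rw [← Matrix.mul_assoc, mul_nonsing_inv _ hUdet, Matrix.one_mul]
  have hVU : (U⁻¹ * Wᴴ)ᴴ * U = W := by
    rw [conjTranspose_mul, conjTranspose_conjTranspose, conjTranspose_nonsing_inv, hU.eq,
      Matrix.mul_assoc, nonsing_inv_mul _ hUdet, Matrix.mul_one]
  have hsquare : (Λ - U⁻¹ * Wᴴ)ᴴ * U * (Λ - U⁻¹ * Wᴴ) =
      Λᴴ * U * Λ - (W * Λ)ᴴ - W * Λ + W * U⁻¹ * Wᴴ := by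
    rw [conjTranspose_sub, Matrix.sub_mul, Matrix.sub_mul, Matrix.mul_sub, Matrix.mul_sub, hVU,
      Matrix.mul_assoc Λᴴ U (U⁻¹ * Wᴴ), hUV, Matrix.mul_assoc W, conjTranspose_mul]
    abel
  have := congrArg (fun M => (trace M).re) hsquare
  simp only [trace_add, trace_sub, Complex.add_re, Complex.sub_re, trace_conjTranspose,
    Complex.star_def, Complex.conj_re] at this
  unfold quadraticTransform
  linarith

lemma quadraticTransform_le {U : Matrix n n ℂ} (hU : U.PosDef) (W : Matrix m n ℂ)
    (Λ : Matrix n m ℂ) : quadraticTransform W U Λ ≤ (trace (W * U⁻¹ * Wᴴ)).re := by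
  rw [quadraticTransform_eq_sub hU.isHermitian ((isUnit_iff_isUnit_det U).mp hU.isUnit)]
  linarith [hU.posSemidef.re_trace_conjTranspose_mul_mul_same_nonneg (Λ - U⁻¹ * Wᴴ)]

lemma quadraticTransform_eq_iff {U : Matrix n n ℂ} (hU : U.PosDef) (W : Matrix m n ℂ)
    (Λ : Matrix n m ℂ) : quadraticTransform W U Λ = (trace (W * U⁻¹ * Wᴴ)).re ↔ Λ = U⁻¹ * Wᴴ := by
  rw [quadraticTransform_eq_sub hU.isHermitian ((isUnit_iff_isUnit_det U).mp hU.isUnit),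
    sub_eq_self, hU.re_trace_conjTranspose_mul_mul_same_eq_zero_iff, sub_eq_zero]

end QuadraticTransform

lemma posDef_of_apply_eq_smul_one_add_sum_kronecker {ι κ τ m : Type*} [Fintype ι] [Fintype κ]
    [Fintype τ] [Fintype m] [DecidableEq τ] [DecidableEq m]
    {σ2 : ℝ} (hσ2 : 0 < σ2) {β : ι → κ → ℝ} (hβ : ∀ i j, 0 ≤ β i j) (φ : ι → κ → τ → ℂ)
    {R : ι → κ → Matrix m m ℂ} (hR : ∀ i j, (R i j).PosSemidef)
    {U : Matrix (τ × m) (τ × m) ℂ}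
    (hU : ∀ sm tn : τ × m, U sm tn = (σ2 : ℂ) * (if sm = tn then 1 else 0) +
        ∑ i, ∑ j, (β i j : ℂ) * (φ i j sm.1) * conj (φ i j tn.1) * (R i j) sm.2 tn.2) :
    U.PosDef := by
  have hUeq : U = σ2 • (1 : Matrix (τ × m) (τ × m) ℂ) +
      ∑ i, ∑ j, ((β i j : ℂ) • vecMulVec (φ i j) (star (φ i j))) ⊗ₖ R i j := by
    ext sm tn
    simp [hU, one_apply, Matrix.sum_apply, vecMulVec_apply, mul_assoc]
  rw [hUeq]
  refine (PosDef.one.smul hσ2).add_posSemidef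
    (posSemidef_sum _ fun i _ => posSemidef_sum _ fun j _ => ?_)
  exact ((posSemidef_vecMulVec_self_star _).smul (by exact_mod_cast hβ i j)).kronecker (hR i j)

theorem correlated_matrix_transform_bound_general (L K τ M' : ℕ)
    (σ2 : ℝ) (hσ2 : 0 < σ2)
    (β : Fin L → Fin L → Fin K → ℝ) (hβ : ∀ l i j, 0 ≤ β l i j)
    (α : Fin L → Fin K → ℝ) (hα : ∀ l k, 0 < α l k)
    (φ : Fin L → Fin K → (Fin τ → ℂ))
    (R : Fin L → Fin L → Fin K → Matrix (Fin M') (Fin M') ℂ)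
    (hR : ∀ l i j, (R l i j).PosSemidef)
    (W : Fin L → Fin K → Matrix (Fin M') (Fin τ × Fin M') ℂ)
    (U : Fin L → Matrix (Fin τ × Fin M') (Fin τ × Fin M') ℂ)
    (hU : ∀ (l : Fin L) (sm tn : Fin τ × Fin M'),
      U l sm tn = (σ2 : ℂ) * (if sm = tn then 1 else 0) +
        ∑ i : Fin L, ∑ j : Fin K,
          (β l i j : ℂ) * (φ i j sm.1) * conj (φ i j tn.1) * (R l i j) sm.2 tn.2)
    (f : (Fin L → Fin K → Matrix (Fin τ × Fin M') (Fin M') ℂ) → ℝ)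
    (hf : ∀ Λ : Fin L → Fin K → Matrix (Fin τ × Fin M') (Fin M') ℂ,
      f Λ = ∑ l : Fin L, ∑ k : Fin K,
        α l k * (2 * (Matrix.trace ((W l k) * (Λ l k))).re -
          (Matrix.trace ((Λ l k)ᴴ * (U l) * (Λ l k))).re)) :
    ∀ Λ : Fin L → Fin K → Matrix (Fin τ × Fin M') (Fin M') ℂ,
      f Λ ≤ ∑ l : Fin L, ∑ k : Fin K,
        α l k * (Matrix.trace ((W l k) * (U l)⁻¹ * (W l k)ᴴ)).re ∧
      (f Λ = ∑ l : Fin L, ∑ k : Fin K,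
          α l k * (Matrix.trace ((W l k) * (U l)⁻¹ * (W l k)ᴴ)).re ↔
        ∀ (l : Fin L) (k : Fin K), Λ l k = (U l)⁻¹ * (W l k)ᴴ) := by
  intro Λ
  have hUpd : ∀ l, (U l).PosDef := fun l =>
    posDef_of_apply_eq_smul_one_add_sum_kronecker hσ2 (hβ l) φ (hR l) (hU l)
  have hterm : ∀ l k, α l k * quadraticTransform (W l k) (U l) (Λ l k) ≤
      α l k * (trace (W l k * (U l)⁻¹ * (W l k)ᴴ)).re := fun l k =>
    mul_le_mul_of_nonneg_left (quadraticTransform_le (hUpd l) _ _) (hα l k).le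
  have hfΛ : f Λ = ∑ l, ∑ k, α l k * quadraticTransform (W l k) (U l) (Λ l k) := hf Λ
  rw [hfΛ]
  refine ⟨Finset.sum_le_sum fun l _ => Finset.sum_le_sum fun k _ => hterm l k, ?_⟩
  rw [Finset.sum_eq_sum_iff_of_le fun l _ => Finset.sum_le_sum fun k _ => hterm l k]
  simp only [Finset.mem_univ, forall_const]
  refine forall_congr' fun l => ?_
  rw [Finset.sum_eq_sum_iff_of_le fun k _ => hterm l k]
  simp only [Finset.mem_univ, forall_const]
  refine forall_congr' fun k => ?_
  rw [mul_right_inj' (hα l k).ne', quadraticTransform_eq_iff (hUpd l) _ _]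

/-- Correlated multicell setup: for every family of auxiliary matrices `Λ`, the
matrix quadratic-transform objective satisfies
`f φ Λ ≤ Σ_{l,k} α_{lk} Re tr(W_{lk} U_l⁻¹ W_{lk}ᴴ)`, with equality iff
`Λ l k = (U l)⁻¹ * (W l k)ᴴ` for every `(l,k)`. -/
theorem correlated_matrix_transform_bound (L K τ M' : ℕ)
    (hL : 0 < L) (hK : 0 < K) (hτ : 0 < τ) (hM' : 0 < M')
    (σ2 : ℝ) (hσ2 : 0 < σ2)
    (β : Fin L → Fin L → Fin K → ℝ) (hβ : ∀ l i j, 0 ≤ β l i j)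
    (α : Fin L → Fin K → ℝ) (hα : ∀ l k, 0 < α l k)
    (φ : Fin L → Fin K → (Fin τ → ℂ))
    (R : Fin L → Fin L → Fin K → Matrix (Fin M') (Fin M') ℂ)
    (hR : ∀ l i j, (R l i j).PosSemidef)
    (W : Fin L → Fin K → Matrix (Fin M') (Fin τ × Fin M') ℂ)
    (hW : ∀ (l : Fin L) (k : Fin K) (n : Fin M') (sm : Fin τ × Fin M'),
      W l k n sm = (β l l k : ℂ) * conj (φ l k sm.1) * (R l l k) n sm.2)
    (U : Fin L → Matrix (Fin τ × Fin M') (Fin τ × Fin M') ℂ)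
    (hU : ∀ (l : Fin L) (sm tn : Fin τ × Fin M'),
      U l sm tn = (σ2 : ℂ) * (if sm = tn then 1 else 0) +
        ∑ i : Fin L, ∑ j : Fin K,
          (β l i j : ℂ) * (φ i j sm.1) * conj (φ i j tn.1) * (R l i j) sm.2 tn.2)
    (f : (Fin L → Fin K → Matrix (Fin τ × Fin M') (Fin M') ℂ) → ℝ)
    (hf : ∀ Λ : Fin L → Fin K → Matrix (Fin τ × Fin M') (Fin M') ℂ,
      f Λ = ∑ l : Fin L, ∑ k : Fin K,
        α l k * (2 * (Matrix.trace ((W l k) * (Λ l k))).re -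
          (Matrix.trace ((Λ l k)ᴴ * (U l) * (Λ l k))).re)) :
    ∀ Λ : Fin L → Fin K → Matrix (Fin τ × Fin M') (Fin M') ℂ,
      f Λ ≤ ∑ l : Fin L, ∑ k : Fin K,
        α l k * (Matrix.trace ((W l k) * (U l)⁻¹ * (W l k)ᴴ)).re ∧
      (f Λ = ∑ l : Fin L, ∑ k : Fin K,
          α l k * (Matrix.trace ((W l k) * (U l)⁻¹ * (W l k)ᴴ)).re ↔
        ∀ (l : Fin L) (k : Fin K), Λ l k = (U l)⁻¹ * (W l k)ᴴ) :=
  correlated_matrix_transform_bound_general L K τ M' σ2 hσ2 β hβ α hα φ R hR W U hU f hf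
end

section
/- Assume β l i j ≥ 0 for all l, i, j and σ² > 0. Then for every pilot configuration φ and every pair (l, k), (β l l k) * Re (star (φ l k) ⬝ᵥ ((D l φ)⁻¹ *ᵥ (φ l k))) ≤ 1. Equivalently, for any number of antennas M ≥ 0, the minimum mean squared error expression M * (β l l k) − M * (β l l k)^2 * Re (star (φ l k) ⬝ᵥ ((D l φ)⁻¹ *ᵥ (φ l k))) is nonnegative. -/
/-!
Write `A = D_l(φ)` and `q = φᴴ A⁻¹ φ` for `φ = φ_{lk}`, `c = β_{llk}`. Since `A` is `σ²I` plus a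
nonnegative combination of the rank-one matrices `φ_{ij} φ_{ij}ᴴ`, it is positive definite and
dominates `c φ φᴴ` in the Loewner order. Testing `A - c φ φᴴ ⪰ 0` against `x = A⁻¹ φ` gives
`q - c q² ≥ 0`, and `q ≥ 0` because `A⁻¹` is positive definite; hence `c q ≤ 1`.
-/

open Matrix ComplexConjugate
open scoped ComplexOrder MatrixOrder

variable {n 𝕜 : Type*} [Fintype n] [RCLike 𝕜]

section RankOneSum

variable {ι : Type*} [Fintype ι] {σ : ℝ} {w : ι → ℝ} (u : ι → n → 𝕜)

theorem Matrix.posSemidef_sum_smul_vecMulVec (hw : ∀ i, 0 ≤ w i) :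
    (∑ i, w i • vecMulVec (u i) (star (u i))).PosSemidef :=
  posSemidef_sum _ fun i _ => (posSemidef_vecMulVec_self_star (u i)).smul (hw i)

variable [DecidableEq n]

theorem Matrix.posDef_smul_one_add_sum_smul_vecMulVec (hσ : 0 < σ) (hw : ∀ i, 0 ≤ w i) :
    (σ • (1 : Matrix n n 𝕜) + ∑ i, w i • vecMulVec (u i) (star (u i))).PosDef :=
  (PosDef.one.smul hσ).add_posSemidef (posSemidef_sum_smul_vecMulVec u hw)

theorem Matrix.smul_vecMulVec_le_smul_one_add_sum (hσ : 0 ≤ σ) (hw : ∀ i, 0 ≤ w i) (i : ι) :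
    w i • vecMulVec (u i) (star (u i)) ≤
      σ • (1 : Matrix n n 𝕜) + ∑ j, w j • vecMulVec (u j) (star (u j)) :=
  (Finset.single_le_sum (fun j _ => ((posSemidef_vecMulVec_self_star (u j)).smul (hw j)).nonneg)
    (Finset.mem_univ i)).trans (le_add_of_nonneg_left (PosSemidef.one.smul hσ).nonneg)

end RankOneSum

theorem Matrix.PosDef.mul_re_star_dotProduct_inv_mulVec_le_one [DecidableEq n]
    {A : Matrix n n 𝕜} (hA : A.PosDef) {c : ℝ} {v : n → 𝕜}
    (hle : c • vecMulVec v (star v) ≤ A) :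
    c * RCLike.re (star v ⬝ᵥ (A⁻¹ *ᵥ v)) ≤ 1 := by
  set x := A⁻¹ *ᵥ v
  have hAx : A *ᵥ x = v := by
    rw [mulVec_mulVec, mul_nonsing_inv _ ((isUnit_iff_isUnit_det A).1 hA.isUnit), one_mulVec]
  obtain ⟨q, hq0, hq⟩ : ∃ q ≥ (0 : ℝ), (q : 𝕜) = star v ⬝ᵥ x :=
    RCLike.nonneg_iff_exists_ofReal.1 (hA.inv.posSemidef.dotProduct_mulVec_nonneg v)
  have hxv : star x ⬝ᵥ v = q := by
    rw [star_dotProduct, ← hq, RCLike.star_def, RCLike.conj_ofReal]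
  have hquad : 0 ≤ q - c * q ^ 2 := by
    have h := (le_iff.1 hle).dotProduct_mulVec_nonneg x
    rwa [sub_mulVec, dotProduct_sub, hAx, smul_mulVec, vecMulVec_mulVec, dotProduct_smul,
      dotProduct_smul, ← hq, hxv, op_smul_eq_mul, RCLike.real_smul_eq_coe_mul,
      ← RCLike.ofReal_mul, ← RCLike.ofReal_mul, ← RCLike.ofReal_sub, RCLike.ofReal_nonneg,
      ← sq] at h
  rw [← hq, RCLike.ofReal_re]
  rcases hq0.eq_or_lt with rfl | hpos
  · simp
  · nlinarith

theorem mmse_nonneg_general (L K τ : ℕ)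
    (σ2 : ℝ) (hσ2 : 0 < σ2)
    (β : Fin L → Fin L → Fin K → ℝ) (hβ : ∀ l i j, 0 ≤ β l i j)
    (D : Fin L → (Fin L → Fin K → (Fin τ → ℂ)) → Matrix (Fin τ) (Fin τ) ℂ)
    (hD : ∀ l φ s t, D l φ s t =
      (σ2 : ℂ) * (if s = t then 1 else 0) +
        ∑ i : Fin L, ∑ j : Fin K, (β l i j : ℂ) * (φ i j s) * conj (φ i j t)) :
    ∀ (φ : Fin L → Fin K → (Fin τ → ℂ)) (l : Fin L) (k : Fin K),
      (β l l k) * (star (φ l k) ⬝ᵥ ((D l φ)⁻¹ *ᵥ (φ l k))).re ≤ 1 ∧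
      ∀ M : ℝ, 0 ≤ M →
        0 ≤ M * (β l l k) -
          M * (β l l k) ^ 2 * (star (φ l k) ⬝ᵥ ((D l φ)⁻¹ *ᵥ (φ l k))).re := by
  intro φ l k
  set u : Fin L × Fin K → Fin τ → ℂ := fun p => φ p.1 p.2
  set w : Fin L × Fin K → ℝ := fun p => β l p.1 p.2
  have hw : ∀ p, 0 ≤ w p := fun p => hβ l p.1 p.2
  have hDl : D l φ = σ2 • 1 + ∑ p, w p • vecMulVec (u p) (star (u p)) := by
    ext s t
    simp [u, w, hD, Fintype.sum_prod_type, vecMulVec, one_apply, Matrix.sum_apply,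
      Complex.real_smul, mul_assoc]
  have hbound : β l l k * (star (φ l k) ⬝ᵥ ((D l φ)⁻¹ *ᵥ φ l k)).re ≤ 1 := by
    rw [hDl]
    exact (posDef_smul_one_add_sum_smul_vecMulVec u hσ2 hw).mul_re_star_dotProduct_inv_mulVec_le_one
      (smul_vecMulVec_le_smul_one_add_sum u hσ2.le hw (l, k))
  refine ⟨hbound, fun M hM => ?_⟩
  have := mul_nonneg (mul_nonneg hM (hβ l l k)) (sub_nonneg.2 hbound)
  linarith

/-- Nonnegativity of the minimum mean squared error: with nonnegative fading and
positive noise, for every pilot configuration `φ` and every user `(l,k)`,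
`β_{llk} Re(φ_{lk}ᴴ (D_l φ)⁻¹ φ_{lk}) ≤ 1`; equivalently, for every number of
antennas `M ≥ 0`, `M β_{llk} − M β_{llk}² φ_{lk}ᴴ D_l⁻¹ φ_{lk} ≥ 0`. -/
theorem mmse_nonneg (L K τ : ℕ) (hL : 0 < L) (hK : 0 < K) (hτ : 0 < τ)
    (σ2 : ℝ) (hσ2 : 0 < σ2)
    (β : Fin L → Fin L → Fin K → ℝ) (hβ : ∀ l i j, 0 ≤ β l i j)
    (D : Fin L → (Fin L → Fin K → (Fin τ → ℂ)) → Matrix (Fin τ) (Fin τ) ℂ)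
    (hD : ∀ l φ s t, D l φ s t =
      (σ2 : ℂ) * (if s = t then 1 else 0) +
        ∑ i : Fin L, ∑ j : Fin K, (β l i j : ℂ) * (φ i j s) * conj (φ i j t)) :
    ∀ (φ : Fin L → Fin K → (Fin τ → ℂ)) (l : Fin L) (k : Fin K),
      (β l l k) * (star (φ l k) ⬝ᵥ ((D l φ)⁻¹ *ᵥ (φ l k))).re ≤ 1 ∧
      ∀ M : ℝ, 0 ≤ M →
        0 ≤ M * (β l l k) -
          M * (β l l k) ^ 2 * (star (φ l k) ⬝ᵥ ((D l φ)⁻¹ *ᵥ (φ l k))).re :=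
  mmse_nonneg_general L K τ σ2 hσ2 β hβ D hD
end
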